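/- For c > 0, K > 0 with K ≠ −λ_m for all m, every eigenvalue of the operator 𝒜_w(ϑ, w) = (−Kϑ + w(0), −i w'' − c w) on ℂ × L²(0,1), with domain {(ϑ,w) ∈ ℂ × H²(0,1) : w(1)=0, w'(0)=0}, is either λ₀ = −K (with eigenfunction (ϑ₀, 0), ϑ₀ ≠ 0) or λ_m = −c + i(m+1/2)²π² for some m ∈ ℕ (with eigenfunction (1/(K+λ_m), cos((m+1/2)πx))). -/

import Mathlib

/-- The eigenvalues `λ_m = -c + i (m+1/2)² π²`. -/
noncomputable def lamEig (c : ℝ) (m : ℕ) : ℂ :=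
  -(c : ℂ) + Complex.I * ((((m : ℝ) + 1 / 2) ^ 2 * Real.pi ^ 2 : ℝ) : ℂ)

/-- The eigenfunctions `w_m(x) = cos((m+1/2)πx)`. -/
noncomputable def wEig (m : ℕ) (x : ℝ) : ℂ :=
  ((Real.cos (((m : ℝ) + 1 / 2) * Real.pi * x) : ℝ) : ℂ)

/-!
On `[0, 1]` the equation `-i w'' - c w = λ w` reads `w'' = -k² w` with `k² = -i (λ + c)`.
Together with `w'(0) = 0`, uniqueness for the equivalent first order system forces
`w = w(0) cos (k x)`. If `w ≠ 0` then `w(0) ≠ 0`, so `w(1) = 0` gives `cos k = 0`, i.e.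
`k = ±(m + 1/2) π`, and `λ = -c + i k² = λ_m`. If `w = 0` then `ϑ ≠ 0` and the first
component gives `λ = -K`.
-/

open Complex Set

lemma iteratedDeriv_two_eq_deriv_deriv {E : Type*} [NormedAddCommGroup E] [NormedSpace ℝ E]
    (f : ℝ → E) : iteratedDeriv 2 f = deriv (deriv f) := by
  rw [iteratedDeriv_eq_iterate, Function.iterate_succ_apply', Function.iterate_one]

lemma hasDerivAt_cos_mul_ofReal (k : ℂ) (x : ℝ) :
    HasDerivAt (fun y : ℝ => cos (k * y)) (-k * sin (k * x)) x := by
  simpa [mul_comm] using ((hasDerivAt_id (x : ℂ)).const_mul k).ccos.comp_ofReal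

lemma hasDerivAt_sin_mul_ofReal (k : ℂ) (x : ℝ) :
    HasDerivAt (fun y : ℝ => sin (k * y)) (k * cos (k * x)) x := by
  simpa [mul_comm] using ((hasDerivAt_id (x : ℂ)).const_mul k).csin.comp_ofReal

lemma iteratedDeriv_two_cos_mul_ofReal (k : ℂ) (x : ℝ) :
    iteratedDeriv 2 (fun y : ℝ => cos (k * y)) x = -k ^ 2 * cos (k * x) := by
  have hderiv : deriv (fun y : ℝ => cos (k * y)) = fun y : ℝ => -k * sin (k * y) :=
    funext fun y => (hasDerivAt_cos_mul_ofReal k y).deriv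
  rw [iteratedDeriv_two_eq_deriv_deriv, hderiv,
    ((hasDerivAt_sin_mul_ofReal k x).const_mul (-k)).deriv]
  ring

lemma wEig_eq_cos (m : ℕ) :
    wEig m = fun x : ℝ => cos (((((m : ℝ) + 1 / 2) * Real.pi : ℝ) : ℂ) * x) := by
  funext x
  rw [wEig, ofReal_cos]
  push_cast
  ring_nf

theorem eqOn_mul_cos_of_deriv_deriv_eq {w : ℝ → ℂ} {k : ℂ} {b : ℝ} (hw : ContDiff ℝ 2 w)
    (hw' : deriv w 0 = 0) (hode : ∀ x ∈ Ico 0 b, deriv (deriv w) x = -k ^ 2 * w x) :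
    EqOn w (fun x => w 0 * cos (k * x)) (Icc 0 b) := by
  have hw'_contDiff : ContDiff ℝ 1 (deriv w) := hw.iterate_deriv' 1 1
  let L : ℂ × ℂ →L[ℂ] ℂ × ℂ := (ContinuousLinearMap.snd ℂ ℂ ℂ).prod
    ((-k ^ 2) • ContinuousLinearMap.fst ℂ ℂ ℂ)
  have hL : ∀ p : ℂ × ℂ, L p = (p.2, -k ^ 2 * p.1) := fun _ => rfl
  have hsystem : EqOn (fun x => (w x, deriv w x))
      (fun x => (w 0 * cos (k * x), -(w 0) * k * sin (k * x))) (Icc 0 b) := by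
    refine ODE_solution_unique (v := fun _ => L) (fun _ => L.lipschitz)
      (hw.continuous.prodMk hw'_contDiff.continuous).continuousOn
      (fun t ht => ?_) (by fun_prop) (fun t _ => ?_) (by simp [hw'])
    · rw [hL, ← hode t ht]
      exact ((hw.differentiable (by norm_num) t).hasDerivAt.prodMk
        (hw'_contDiff.differentiable one_ne_zero t).hasDerivAt).hasDerivWithinAt
    · convert (((hasDerivAt_cos_mul_ofReal k t).const_mul (w 0)).prodMk
        ((hasDerivAt_sin_mul_ofReal k t).const_mul (-(w 0) * k))).hasDerivWithinAt using 1
      rw [hL]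
      ext <;> simp only <;> ring
  exact fun x hx => congrArg Prod.fst (hsystem hx)

lemma exists_nat_sq_eq_of_cos_eq_zero {k : ℂ} (h : cos k = 0) :
    ∃ m : ℕ, k ^ 2 = (((m : ℂ) + 1 / 2) * Real.pi) ^ 2 := by
  obtain ⟨n, rfl⟩ := cos_eq_zero_iff.mp h
  obtain ⟨m, hm⟩ : ∃ m : ℕ, (2 * m + 1 : ℤ) = (2 * n + 1).natAbs :=
    ⟨(2 * n + 1).natAbs / 2, by omega⟩
  have hsq : ((2 * m + 1 : ℤ) : ℂ) ^ 2 = ((2 * n + 1 : ℤ) : ℂ) ^ 2 := by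
    exact_mod_cast (hm ▸ Int.natAbs_sq (2 * n + 1) : (2 * m + 1 : ℤ) ^ 2 = (2 * n + 1) ^ 2)
  push_cast at hsq
  exact ⟨m, by linear_combination -(Real.pi : ℂ) ^ 2 / 4 * hsq⟩

theorem exists_eq_lamEig_of_eigenfunction {c : ℝ} {lam : ℂ} {w : ℝ → ℂ} (hw : ContDiff ℝ 2 w)
    (hw1 : w 1 = 0) (hw'0 : deriv w 0 = 0) (hne : ∃ x ∈ Icc (0 : ℝ) 1, w x ≠ 0)
    (hode : ∀ x ∈ Icc (0 : ℝ) 1, -I * iteratedDeriv 2 w x - (c : ℂ) * w x = lam * w x) :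
    ∃ m : ℕ, lam = lamEig c m := by
  obtain ⟨k, hk⟩ := IsAlgClosed.exists_pow_nat_eq (-(I * (lam + c))) two_pos
  have hcos : EqOn w (fun x => w 0 * cos (k * x)) (Icc 0 1) := by
    refine eqOn_mul_cos_of_deriv_deriv_eq hw hw'0 fun x hx => ?_
    have := hode x (Ico_subset_Icc_self hx)
    rw [iteratedDeriv_two_eq_deriv_deriv] at this
    linear_combination I * this + deriv (deriv w) x * I_sq + w x * hk
  have hw0 : w 0 ≠ 0 := by
    obtain ⟨x, hx, hwx⟩ := hne
    exact fun h => hwx (by simpa [h] using hcos hx)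
  have hcosk : cos k = 0 := by
    simpa [hw1, hw0] using (hcos (right_mem_Icc.mpr zero_le_one)).symm
  obtain ⟨m, hm⟩ := exists_nat_sq_eq_of_cos_eq_zero hcosk
  refine ⟨m, ?_⟩
  rw [lamEig]
  push_cast
  linear_combination -I * hk + (lam + c) * I_sq + I * hm

theorem stmt_11_general (c K : ℝ)
    (hKm : ∀ m : ℕ, (K : ℂ) ≠ -lamEig c m) :
    (∀ (lam ϑ : ℂ) (w : ℝ → ℂ), ContDiff ℝ 2 w → w 1 = 0 → deriv w 0 = 0 →
      ¬(ϑ = 0 ∧ ∀ x ∈ Set.Icc (0 : ℝ) 1, w x = 0) →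
      -(K : ℂ) * ϑ + w 0 = lam * ϑ →
      (∀ x ∈ Set.Icc (0 : ℝ) 1,
          -Complex.I * iteratedDeriv 2 w x - (c : ℂ) * w x = lam * w x) →
      (lam = -(K : ℂ) ∨ ∃ m : ℕ, lam = lamEig c m)) ∧
    (∀ ϑ₀ : ℂ, ϑ₀ ≠ 0 → -(K : ℂ) * ϑ₀ + (0 : ℂ) = (-(K : ℂ)) * ϑ₀) ∧
    (∀ m : ℕ,
      (-(K : ℂ) * (1 / ((K : ℂ) + lamEig c m)) + wEig m 0
          = lamEig c m * (1 / ((K : ℂ) + lamEig c m))) ∧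
      ∀ x ∈ Set.Icc (0 : ℝ) 1,
        -Complex.I * iteratedDeriv 2 (wEig m) x - (c : ℂ) * wEig m x
          = lamEig c m * wEig m x) := by
  refine ⟨fun lam ϑ w hw hw1 hw'0 hnt hϑ hode => ?_, fun _ _ => by ring, fun m => ⟨?_, ?_⟩⟩
  · by_cases hzero : ∀ x ∈ Icc (0 : ℝ) 1, w x = 0
    · have hϑ0 : ϑ ≠ 0 := fun h => hnt ⟨h, hzero⟩
      rw [hzero 0 (left_mem_Icc.mpr zero_le_one), add_zero] at hϑ
      exact Or.inl (mul_right_cancel₀ hϑ0 hϑ.symm)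
    · push Not at hzero
      exact Or.inr (exists_eq_lamEig_of_eigenfunction hw hw1 hw'0 hzero hode)
  · have hne : (K : ℂ) + lamEig c m ≠ 0 := fun h => hKm m (eq_neg_of_add_eq_zero_left h)
    rw [show wEig m 0 = 1 by simp [wEig]]
    field_simp
    ring
  · intro x _
    rw [wEig_eq_cos, iteratedDeriv_two_cos_mul_ofReal, lamEig]
    push_cast
    ring

theorem stmt_11 (c K : ℝ) (hc : 0 < c) (hK : 0 < K)
    (hKm : ∀ m : ℕ, (K : ℂ) ≠ -lamEig c m) :
    (∀ (lam ϑ : ℂ) (w : ℝ → ℂ), ContDiff ℝ 2 w → w 1 = 0 → deriv w 0 = 0 →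
      ¬(ϑ = 0 ∧ ∀ x ∈ Set.Icc (0 : ℝ) 1, w x = 0) →
      -(K : ℂ) * ϑ + w 0 = lam * ϑ →
      (∀ x ∈ Set.Icc (0 : ℝ) 1,
          -Complex.I * iteratedDeriv 2 w x - (c : ℂ) * w x = lam * w x) →
      (lam = -(K : ℂ) ∨ ∃ m : ℕ, lam = lamEig c m)) ∧
    (∀ ϑ₀ : ℂ, ϑ₀ ≠ 0 → -(K : ℂ) * ϑ₀ + (0 : ℂ) = (-(K : ℂ)) * ϑ₀) ∧
    (∀ m : ℕ,
      (-(K : ℂ) * (1 / ((K : ℂ) + lamEig c m)) + wEig m 0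
          = lamEig c m * (1 / ((K : ℂ) + lamEig c m))) ∧
      ∀ x ∈ Set.Icc (0 : ℝ) 1,
        -Complex.I * iteratedDeriv 2 (wEig m) x - (c : ℂ) * wEig m x
          = lamEig c m * wEig m x) :=
  stmt_11_general c K hKm
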